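/- arXiv:2102.04707 — 2 statements merged into one kernel-verified Lean document; each statement's English description precedes it below -/
import Mathlib

section
/- For every incidence graph G and integer k, if the weak recursive backdoor depth of G to 𝒞₀ is at most k, then every connected component of G has diameter at most 4·2^k − 4. -/
/-- Variables are natural numbers. -/
abbrev Var := ℕ

/-- A CNF formula: a finite set of clause identifiers, each identifier `i`
carrying the set of variables occurring positively (`pos i`) and negatively (`neg i`). -/
structure CNF where
  ids : Finset ℕ
  pos : ℕ → Finset Var
  neg : ℕ → Finset Var

namespace CNF

/-- The variables of clause `i`. -/
def cvars (φ : CNF) (i : ℕ) : Finset Var := φ.pos i ∪ φ.neg i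

/-- The variables of the formula. -/
def vars (φ : CNF) : Finset Var := φ.ids.biUnion φ.cvars

/-- The length of the formula: the sum of clause widths. -/
def len (φ : CNF) : ℕ := ∑ i ∈ φ.ids, (φ.cvars i).card

/-- `φ ∈ 𝒞_d`: every clause has at most `d` variables. -/
def InC (φ : CNF) (d : ℕ) : Prop := ∀ i ∈ φ.ids, (φ.cvars i).card ≤ d

/-- Assigning variable `x` to Boolean value `b`: clauses satisfied by the
assignment are removed, and `x` is removed from the remaining clauses. -/
def assign (φ : CNF) (x : Var) (b : Bool) : CNF where
  ids := φ.ids.filter fun i => x ∉ (if b then φ.pos i else φ.neg i)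
  pos := fun i => (φ.pos i).erase x
  neg := fun i => (φ.neg i).erase x

/-- Assigning all variables of a set `D` according to `τ`. -/
def assignSet (φ : CNF) (D : Finset Var) (τ : Var → Bool) : CNF where
  ids := φ.ids.filter fun i => ¬ ∃ x ∈ D, if τ x then x ∈ φ.pos i else x ∈ φ.neg i
  pos := fun i => φ.pos i \ D
  neg := fun i => φ.neg i \ D

/-- `τ` satisfies every clause of `φ`. -/
def satBy (φ : CNF) (τ : Var → Bool) : Prop :=
  ∀ i ∈ φ.ids, (∃ x ∈ φ.pos i, τ x = true) ∨ (∃ x ∈ φ.neg i, τ x = false)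

/-- `φ` is satisfiable. -/
def sat (φ : CNF) : Prop := ∃ τ, φ.satBy τ

/-- The number of satisfying assignments of `φ` over its variables
(assignments are normalized to be `false` outside `vars φ`). -/
noncomputable def count (φ : CNF) : ℕ :=
  Nat.card {τ : Var → Bool // φ.satBy τ ∧ ∀ x ∉ φ.vars, τ x = false}

/-- The incidence graph of `φ`: variable vertices `Sum.inl x` and clause
vertices `Sum.inr i`, adjacent iff `x` occurs in clause `i` of `φ`. -/
def incGraph (φ : CNF) : SimpleGraph (Var ⊕ ℕ) where
  Adj u v := match u, v with
    | Sum.inl x, Sum.inr i => i ∈ φ.ids ∧ x ∈ φ.cvars i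
    | Sum.inr i, Sum.inl x => i ∈ φ.ids ∧ x ∈ φ.cvars i
    | _, _ => False
  symm := ⟨by rintro (x | i) (y | j) h <;> exact h⟩
  loopless := ⟨by rintro (x | i) h <;> exact h⟩

/-- The vertices of the incidence graph that belong to `φ`. -/
def vertexSet (φ : CNF) : Set (Var ⊕ ℕ) :=
  {v | match v with | Sum.inl x => x ∈ φ.vars | Sum.inr i => i ∈ φ.ids}

/-- The incidence graph of `φ` is connected. -/
def Conn (φ : CNF) : Prop :=
  ∀ u ∈ φ.vertexSet, ∀ v ∈ φ.vertexSet, (incGraph φ).Reachable u v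

/-- The connected component (as a subformula) of clause `i` of `φ`. -/
noncomputable def componentOf (φ : CNF) (i : ℕ) : CNF := by
  classical
  exact { ids := φ.ids.filter fun j => (incGraph φ).Reachable (Sum.inr i) (Sum.inr j),
          pos := φ.pos, neg := φ.neg }

/-- The connected components of `φ`, as subformulas. -/
noncomputable def components (φ : CNF) : Finset CNF := by
  classical
  exact φ.ids.image φ.componentOf

/-- `ψ` is a connected component of `φ`. -/
def IsComponent (φ ψ : CNF) : Prop := ψ ∈ φ.components

end CNF

/-- `SrbdLE φ k`: the strong recursive backdoor depth of `φ` to `𝒞₀` is at most `k`.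
Either `φ` is edgeless, or we may assign one variable both ways at cost one,
or we may split into connected components for free. -/
inductive SrbdLE : CNF → ℕ → Prop where
| base (φ : CNF) (k : ℕ) : φ.vars = ∅ → SrbdLE φ k
| assign (φ : CNF) (k : ℕ) (x : Var) : x ∈ φ.vars →
    SrbdLE (φ.assign x true) k → SrbdLE (φ.assign x false) k → SrbdLE φ (k+1)
| split (φ : CNF) (k : ℕ) : (∀ ψ ∈ φ.components, SrbdLE ψ k) → SrbdLE φ k

/-- `WrbdLE φ k`: the weak recursive backdoor depth of `φ` to `𝒞₀` is at most `k`. -/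
inductive WrbdLE : CNF → ℕ → Prop where
| base (φ : CNF) (k : ℕ) : φ.vars = ∅ → φ.sat → WrbdLE φ k
| assign (φ : CNF) (k : ℕ) (x : Var) (b : Bool) : x ∈ φ.vars →
    WrbdLE (φ.assign x b) k → WrbdLE φ (k+1)
| split (φ : CNF) (k : ℕ) : (∀ ψ ∈ φ.components, WrbdLE ψ k) → WrbdLE φ k

/-- A strong recursive backdoor tree of `φ` to the class `C`:
leaves are formulas in `C`; a variable node branches on both assignments of a
variable of `φ`; a component node has one child per connected component. -/
inductive SRB (C : Set CNF) : CNF → Type where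
| leaf : (φ : CNF) → φ ∈ C → SRB C φ
| varNode : (φ : CNF) → (x : Var) → x ∈ φ.vars →
    SRB C (φ.assign x true) → SRB C (φ.assign x false) → SRB C φ
| compNode : (φ : CNF) → ((ψ : CNF) → ψ ∈ φ.components → SRB C ψ) → SRB C φ

namespace SRB

variable {C : Set CNF}

/-- The depth of a strong recursive backdoor: the maximal number of variable
nodes on a root-to-leaf path. -/
noncomputable def depth : {φ : CNF} → SRB C φ → ℕ
| _, .leaf _ _ => 0
| _, .varNode _ _ _ l r => 1 + max (depth l) (depth r)
| _, .compNode φ f => φ.components.attach.sup fun ψ => depth (f ψ.1 ψ.2)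

/-- The number of leaf nodes of a strong recursive backdoor. -/
noncomputable def leaves : {φ : CNF} → SRB C φ → ℕ
| _, .leaf _ _ => 1
| _, .varNode _ _ _ l r => leaves l + leaves r
| _, .compNode φ f => ∑ ψ ∈ φ.components.attach, leaves (f ψ.1 ψ.2)

/-- Bottom-up satisfiability evaluation of a strong recursive backdoor:
a leaf evaluates to the satisfiability of its formula, a variable node to the
disjunction of its children, a component node to the conjunction of its children. -/
def eval : {φ : CNF} → SRB C φ → Prop
| _, .leaf φ _ => φ.sat
| _, .varNode _ _ _ l r => eval l ∨ eval r
| _, .compNode φ f => ∀ (ψ : CNF) (h : ψ ∈ φ.components), eval (f ψ h)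

/-- Bottom-up model counting: a leaf contributes its model count, a variable
node the sum over both polarities (corrected by factors `2^e` for variables
disappearing from all clauses), a component node the product over components. -/
noncomputable def countEval : {φ : CNF} → SRB C φ → ℕ
| _, .leaf φ _ => φ.count
| _, .varNode φ x _ l r =>
    2 ^ (((φ.vars.erase x) \ (φ.assign x true).vars).card) * countEval l
  + 2 ^ (((φ.vars.erase x) \ (φ.assign x false).vars).card) * countEval r
| _, .compNode φ f => ∏ ψ ∈ φ.components.attach, countEval (f ψ.1 ψ.2)

end SRB

/-- The underlying data of an obstruction-tree: a base clause, or two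
obstruction-trees joined by a path (a list of incidence-graph vertices). -/
inductive ObsTree : Type where
| base : ℕ → ObsTree
| node : ObsTree → ObsTree → List (Var ⊕ ℕ) → ObsTree

namespace ObsTree

/-- The elements `V(T)` of an obstruction-tree, relative to formula `φ`. -/
def elts (φ : CNF) : ObsTree → Finset (Var ⊕ ℕ)
| .base i => insert (Sum.inr i) ((φ.cvars i).image Sum.inl)
| .node T₁ T₂ P => elts φ T₁ ∪ elts φ T₂ ∪ P.toFinset

/-- The variables `var(T)` among the elements of `T`. -/
def varSet (φ : CNF) (T : ObsTree) : Finset Var :=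
  (T.elts φ).biUnion fun v => match v with | Sum.inl x => {x} | Sum.inr _ => ∅

/-- The clauses `cla(T)` among the elements of `T`. -/
def claSet (φ : CNF) (T : ObsTree) : Finset ℕ :=
  (T.elts φ).biUnion fun v => match v with | Sum.inl _ => ∅ | Sum.inr i => {i}

/-- The destroy-neighborhood `N†_φ(T)`. -/
def nd (φ : CNF) : ObsTree → Finset Var
| .base i => φ.cvars i
| .node T₁ T₂ P =>
    (ObsTree.node T₁ T₂ P).varSet φ ∪
    (((ObsTree.node T₁ T₂ P).claSet φ).biUnion φ.pos ∩
      ((ObsTree.node T₁ T₂ P).claSet φ).biUnion φ.neg)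

end ObsTree

/-- `IsObsTree φ d k i T`: `T` is an `(i,d,k)`-obstruction-tree of `φ`.
A clause of width exactly `d` (with its variables) is a `(d,d,k)`-obstruction-tree;
two `(i,d,k)`-obstruction-trees with disjoint destroy-neighborhoods joined by a
path of length at most `λ_k = 4·2^k` form an `(i+1,d,k)`-obstruction-tree. -/
inductive IsObsTree (φ : CNF) (d k : ℕ) : ℕ → ObsTree → Prop where
| base (i : ℕ) : i ∈ φ.ids → (φ.cvars i).card = d → IsObsTree φ d k d (.base i)
| node (i : ℕ) (T₁ T₂ : ObsTree) (P : List (Var ⊕ ℕ)) :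
    IsObsTree φ d k i T₁ → IsObsTree φ d k i T₂ →
    Disjoint (T₁.nd φ) (T₂.nd φ) →
    P.Chain' (CNF.incGraph φ).Adj → P.Nodup →
    (hne : P ≠ []) →
    P.head hne ∈ T₁.elts φ → P.getLast hne ∈ T₂.elts φ →
    P.length ≤ 4 * 2 ^ k + 1 →
    IsObsTree φ d k (i+1) (.node T₁ T₂ P)

/-!
Assigning a variable `x` only deletes edges at clauses containing `x`, i.e. at neighbours of
`x` in the incidence graph. A shortest path from `x` to `u` therefore runs, after its first two
edges, through a part of the graph that survives the assignment, so `dist x u ≤ D + 2` when the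
components of the reduced graph have diameter at most `D`; hence the component of `x` has
diameter at most `2D + 4`, and the other components are untouched. Splitting into components
does not change distances, and an edgeless graph has diameter `0`. The recursion `D ↦ 2D + 4`
from `0` gives `4·2^k − 4` after `k` assignments.
-/

namespace SimpleGraph

variable {V : Type*} {G H : SimpleGraph V} {D : ℕ}

def ComponentDiamLE (G : SimpleGraph V) (D : ℕ) : Prop :=
  ∀ ⦃u v⦄, G.Reachable u v → G.dist u v ≤ D

lemma componentDiamLE_bot : (⊥ : SimpleGraph V).ComponentDiamLE D := fun _ _ _ => by
  simp [dist_bot]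

lemma ComponentDiamLE.dist_le_of_forall_mem_support {P : V → Prop} (hHG : H ≤ G)
    (hH : ∀ ⦃a b⦄, G.Adj a b → P a → P b → H.Adj a b) (hD : H.ComponentDiamLE D)
    {u v : V} (p : G.Walk u v) (hp : ∀ z ∈ p.support, P z) : G.dist u v ≤ D := by
  have hpH : ∀ e ∈ p.edges, e ∈ H.edgeSet := by
    intro e he
    induction e using Sym2.ind with
    | h a b =>
      exact hH (p.adj_of_mem_edges he) (hp a (p.fst_mem_support_of_mem_edges he))
        (hp b (p.snd_mem_support_of_mem_edges he))
  have hr := (p.transfer H hpH).reachable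
  exact (hr.dist_anti hHG).trans (hD hr)

lemma ComponentDiamLE.dist_le_add_two_of_agree_away_from {c : V} (hHG : H ≤ G)
    (hH : ∀ ⦃a b⦄, G.Adj a b → ¬G.Adj a c → ¬G.Adj b c → H.Adj a b) (hD : H.ComponentDiamLE D)
    {u : V} (hu : G.Reachable c u) : G.dist c u ≤ D + 2 := by
  classical
  obtain ⟨q, hq⟩ := hu.exists_walk_length_eq_dist
  match q, hq with
  | .nil, _ => simp
  | .cons _ .nil, hq => simp only [Walk.length_cons, Walk.length_nil] at hq; omega
  | .cons h₁ (.cons (v := w) h₂ q), hq =>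
    simp only [Walk.length_cons] at hq
    have hfar : ∀ z ∈ q.support, ¬G.Adj z c := by
      intro z hz hzc
      have hzu : G.dist z u ≤ q.length :=
        (dist_le _).trans (q.length_dropUntil_le_length hz)
      have := (q.dropUntil z hz).reachable.dist_triangle_right c
      rw [dist_eq_one_iff_adj.2 hzc.symm] at this
      omega
    have hcw : G.dist c w ≤ 2 := dist_le (.cons h₁ (.cons h₂ .nil))
    have hwu : G.dist w u ≤ D := hD.dist_le_of_forall_mem_support hHG hH q hfar
    have := q.reachable.dist_triangle_right c
    omega

lemma ComponentDiamLE.of_agree_away_from {c : V} (hHG : H ≤ G)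
    (hH : ∀ ⦃a b⦄, G.Adj a b → ¬G.Adj a c → ¬G.Adj b c → H.Adj a b) (hD : H.ComponentDiamLE D) :
    G.ComponentDiamLE (2 * D + 4) := by
  classical
  intro u v huv
  by_cases hcu : G.Reachable c u
  · have hu := hD.dist_le_add_two_of_agree_away_from hHG hH hcu
    have hv := hD.dist_le_add_two_of_agree_away_from hHG hH (hcu.trans huv)
    have := (hcu.trans huv).dist_triangle_right u
    rw [dist_comm] at hu
    omega
  · obtain ⟨p⟩ := huv
    have hfar : ∀ z ∈ p.support, ¬G.Adj z c := fun z hz hzc =>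
      hcu (hzc.symm.reachable.trans (p.takeUntil z hz).reachable.symm)
    have := hD.dist_le_of_forall_mem_support hHG hH p hfar
    omega

end SimpleGraph

open SimpleGraph

namespace CNF

variable {φ : CNF}

lemma incGraph_eq_bot (h : φ.vars = ∅) : incGraph φ = ⊥ := by
  ext (y | i) (z | j) <;> simp only [incGraph, bot_adj, iff_false, not_and]
  · exact fun hj hy => Finset.notMem_empty y (h ▸ Finset.mem_biUnion.2 ⟨j, hj, hy⟩)
  · exact fun hi hz => Finset.notMem_empty z (h ▸ Finset.mem_biUnion.2 ⟨i, hi, hz⟩)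

lemma incGraph_mono {ψ : CNF} (hids : ψ.ids ⊆ φ.ids) (hcvars : ∀ i, ψ.cvars i ⊆ φ.cvars i) :
    incGraph ψ ≤ incGraph φ := by
  rintro (y | i) (z | j) h
  · exact h.elim
  · exact ⟨hids h.1, hcvars j h.2⟩
  · exact ⟨hids h.1, hcvars i h.2⟩
  · exact h.elim

lemma incGraph_assign_le (x : Var) (b : Bool) : incGraph (φ.assign x b) ≤ incGraph φ :=
  incGraph_mono (Finset.filter_subset _ _) fun _ =>
    Finset.union_subset_union (Finset.erase_subset _ _) (Finset.erase_subset _ _)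

lemma incGraph_assign_adj {x : Var} {b : Bool} ⦃u v : Var ⊕ ℕ⦄ (h : (incGraph φ).Adj u v)
    (hu : ¬(incGraph φ).Adj u (.inl x)) (hv : ¬(incGraph φ).Adj v (.inl x)) :
    (incGraph (φ.assign x b)).Adj u v := by
  rcases u with y | i <;> rcases v with z | j <;>
    simp only [incGraph, assign, cvars, Finset.mem_filter, Finset.mem_union, Finset.mem_erase]
      at h hu hv ⊢
  · cases b <;> grind
  · cases b <;> grind

lemma mem_componentOf_ids {i j : ℕ} :
    j ∈ (φ.componentOf i).ids ↔ j ∈ φ.ids ∧ (incGraph φ).Reachable (.inr i) (.inr j) := by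
  simp [componentOf]

lemma incGraph_componentOf_le (i : ℕ) : incGraph (φ.componentOf i) ≤ incGraph φ :=
  incGraph_mono (fun _ hj => (mem_componentOf_ids.1 hj).1) fun _ => subset_rfl

lemma incGraph_componentOf_adj {i : ℕ} {u v : Var ⊕ ℕ} (h : (incGraph φ).Adj u v)
    (hu : (incGraph φ).Reachable (.inr i) u) : (incGraph (φ.componentOf i)).Adj u v := by
  have hv := hu.trans h.reachable
  rcases u with y | j <;> rcases v with z | l
  · exact h.elim
  · exact ⟨mem_componentOf_ids.2 ⟨h.1, hv⟩, h.2⟩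
  · exact ⟨mem_componentOf_ids.2 ⟨h.1, hu⟩, h.2⟩
  · exact h.elim

lemma componentOf_mem_components {i : ℕ} (hi : i ∈ φ.ids) : φ.componentOf i ∈ φ.components := by
  classical
  exact Finset.mem_image_of_mem _ hi

lemma exists_mem_ids_reachable_of_adj {u v : Var ⊕ ℕ} (h : (incGraph φ).Adj u v) :
    ∃ i ∈ φ.ids, (incGraph φ).Reachable (.inr i) u := by
  rcases u with y | i <;> rcases v with z | j
  · exact h.elim
  · exact ⟨j, h.1, h.reachable.symm⟩
  · exact ⟨i, h.1, .rfl⟩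
  · exact h.elim

lemma componentDiamLE_of_components {D : ℕ}
    (h : ∀ ψ ∈ φ.components, (incGraph ψ).ComponentDiamLE D) : (incGraph φ).ComponentDiamLE D := by
  classical
  rintro u v ⟨p⟩
  cases p with
  | nil => simp
  | cons huw q =>
    obtain ⟨i, hi, hiu⟩ := exists_mem_ids_reachable_of_adj huw
    exact (h _ (componentOf_mem_components hi)).dist_le_of_forall_mem_support
      (incGraph_componentOf_le i) (fun _ _ hab ha _ => incGraph_componentOf_adj hab ha)
      (.cons huw q) fun z hz => hiu.trans (Walk.takeUntil _ z hz).reachable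

end CNF

/-- if the weak recursive backdoor depth of `φ` to `𝒞₀` is at
most `k`, then every connected component of the incidence graph has diameter
at most `4·2^k − 4`. -/
theorem wrbd_low_diameter (φ : CNF) (k : ℕ) (h : WrbdLE φ k) :
    ∀ u ∈ φ.vertexSet, ∀ v ∈ φ.vertexSet,
      (CNF.incGraph φ).Reachable u v →
      (CNF.incGraph φ).dist u v ≤ 4 * 2 ^ k - 4 := by
  suffices (CNF.incGraph φ).ComponentDiamLE (4 * 2 ^ k - 4) from fun _ _ _ _ huv => this huv
  induction h with
  | base φ k hvars _ => exact CNF.incGraph_eq_bot hvars ▸ componentDiamLE_bot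
  | assign φ k x b _ _ ih =>
    have hbound : 2 * (4 * 2 ^ k - 4) + 4 = 4 * 2 ^ (k + 1) - 4 := by
      have := Nat.one_le_two_pow (n := k)
      rw [pow_succ]
      omega
    exact hbound ▸ ih.of_agree_away_from (CNF.incGraph_assign_le x b) CNF.incGraph_assign_adj
  | split φ k _ ih => exact CNF.componentDiamLE_of_components ih
end

section
/- Obstruction-trees are only influenced by adjacent variables: for all integers i,d,k, every incidence graph G in 𝒞_d, every (i,d,k)-obstruction-tree T of G, every variable x of G, and every polarity ⋆, if x ∉ var(T) and no clause of T is connected to x by an edge of polarity ⋆, then T is still an (i,d,k)-obstruction-tree of G[x_⋆]. -/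
/-! Assigning `x := b` only erases `x` from the clauses and deletes the clauses containing `x`
with polarity `b`. Neither operation touches an element of `T`, so every clause, element set and
path edge of `T` survives, while destroy-neighborhoods can only shrink, which keeps them
disjoint. -/

namespace CNF

variable {φ : CNF} {x : Var} {b : Bool}

lemma cvars_assign (i : ℕ) : (φ.assign x b).cvars i = (φ.cvars i).erase x := by
  simp only [cvars, assign, Finset.erase_union_distrib]

lemma mem_assign_ids {i : ℕ} :
    i ∈ (φ.assign x b).ids ↔ i ∈ φ.ids ∧ x ∉ (if b then φ.pos i else φ.neg i) :=
  Finset.mem_filter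

lemma incGraph_assign_adj_s7 {S : Finset (Var ⊕ ℕ)} (hxS : Sum.inl x ∉ S)
    (hS : ∀ c, Sum.inr c ∈ S → x ∉ (if b then φ.pos c else φ.neg c))
    {u v : Var ⊕ ℕ} (hu : u ∈ S) (hv : v ∈ S) (huv : (incGraph φ).Adj u v) :
    (incGraph (φ.assign x b)).Adj u v := by
  have hedge : ∀ y c, Sum.inl y ∈ S → Sum.inr c ∈ S → c ∈ φ.ids ∧ y ∈ φ.cvars c →
      c ∈ (φ.assign x b).ids ∧ y ∈ (φ.assign x b).cvars c := by
    rintro y c hy hc ⟨hc_ids, hyc⟩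
    have hyx : y ≠ x := by rintro rfl; exact hxS hy
    exact ⟨mem_assign_ids.2 ⟨hc_ids, hS c hc⟩, cvars_assign c ▸ Finset.mem_erase.2 ⟨hyx, hyc⟩⟩
  rcases u with y | c <;> rcases v with z | e
  · exact huv.elim
  · exact hedge y e hu hv huv
  · exact hedge z c hv hu huv
  · exact huv.elim

end CNF

namespace ObsTree

variable {φ : CNF} {x : Var} {b : Bool}

lemma mem_claSet {T : ObsTree} {c : ℕ} : c ∈ T.claSet φ ↔ Sum.inr c ∈ T.elts φ := by
  simp only [claSet, Finset.mem_biUnion]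
  constructor
  · rintro ⟨(y | e), he, hc⟩
    · simp at hc
    · rwa [Finset.mem_singleton.1 hc]
  · exact fun h => ⟨_, h, Finset.mem_singleton_self c⟩

lemma elts_assign {T : ObsTree} (hx : Sum.inl x ∉ T.elts φ) :
    T.elts (φ.assign x b) = T.elts φ := by
  induction T with
  | base c =>
    have hxc : x ∉ φ.cvars c := fun h => hx (by simp [elts, h])
    rw [elts, elts, CNF.cvars_assign, Finset.erase_eq_self.2 hxc]
  | node T₁ T₂ P ih₁ ih₂ =>
    simp only [elts, Finset.mem_union, not_or] at hx ⊢
    rw [ih₁ hx.1.1, ih₂ hx.1.2]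

lemma nd_assign_subset {T : ObsTree} (hx : Sum.inl x ∉ T.elts φ) :
    T.nd (φ.assign x b) ⊆ T.nd φ := by
  cases T with
  | base c =>
    rw [nd, nd, CNF.cvars_assign]
    exact Finset.erase_subset x _
  | node T₁ T₂ P =>
    simp only [nd, varSet, claSet, elts_assign hx]
    exact Finset.union_subset_union subset_rfl <| Finset.inter_subset_inter
      (Finset.biUnion_mono fun c _ => Finset.erase_subset x _)
      (Finset.biUnion_mono fun c _ => Finset.erase_subset x _)

lemma elts_left_subset_node (T₁ T₂ : ObsTree) (P : List (Var ⊕ ℕ)) :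
    T₁.elts φ ⊆ (node T₁ T₂ P).elts φ :=
  Finset.subset_union_left.trans Finset.subset_union_left

lemma elts_right_subset_node (T₁ T₂ : ObsTree) (P : List (Var ⊕ ℕ)) :
    T₂.elts φ ⊆ (node T₁ T₂ P).elts φ :=
  Finset.subset_union_right.trans Finset.subset_union_left

lemma path_subset_elts_node (T₁ T₂ : ObsTree) (P : List (Var ⊕ ℕ)) :
    P.toFinset ⊆ (node T₁ T₂ P).elts φ :=
  Finset.subset_union_right

end ObsTree

theorem obsTree_local_general (i d k : ℕ) (φ : CNF)
    (T : ObsTree) (hT : IsObsTree φ d k i T) (x : Var) (b : Bool)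
    (hvar : Sum.inl x ∉ T.elts φ)
    (hcla : ∀ c ∈ T.claSet φ, x ∉ (if b then φ.pos c else φ.neg c)) :
    IsObsTree (φ.assign x b) d k i T := by
  simp only [ObsTree.mem_claSet] at hcla
  induction hT with
  | base c hc hcard =>
    have hxc : x ∉ φ.cvars c := fun h => hvar (by simp [ObsTree.elts, h])
    refine .base c (CNF.mem_assign_ids.2 ⟨hc, hcla c (by simp [ObsTree.elts])⟩) ?_
    rwa [CNF.cvars_assign, Finset.erase_eq_self.2 hxc]
  | node j T₁ T₂ P _ _ hdisj hchain hnodup hne hhead hlast hlen ih₁ ih₂ =>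
    have hsub₁ := ObsTree.elts_left_subset_node (φ := φ) T₁ T₂ P
    have hsub₂ := ObsTree.elts_right_subset_node (φ := φ) T₁ T₂ P
    have hx₁ : Sum.inl x ∉ T₁.elts φ := fun h => hvar (hsub₁ h)
    have hx₂ : Sum.inl x ∉ T₂.elts φ := fun h => hvar (hsub₂ h)
    have hpath : P.IsChain (CNF.incGraph (φ.assign x b)).Adj :=
      hchain.imp_of_mem_imp fun u v hu hv =>
        CNF.incGraph_assign_adj_s7 hvar hcla
          (ObsTree.path_subset_elts_node T₁ T₂ P (List.mem_toFinset.2 hu))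
          (ObsTree.path_subset_elts_node T₁ T₂ P (List.mem_toFinset.2 hv))
    exact .node j T₁ T₂ P (ih₁ hx₁ fun c hc => hcla c (hsub₁ hc))
      (ih₂ hx₂ fun c hc => hcla c (hsub₂ hc))
      (hdisj.mono (ObsTree.nd_assign_subset hx₁) (ObsTree.nd_assign_subset hx₂))
      hpath hnodup hne (by rwa [ObsTree.elts_assign hx₁]) (by rwa [ObsTree.elts_assign hx₂]) hlen

/-- obstruction-trees are only influenced by adjacent variables:
if `x ∉ var(T)` and no clause of `T` contains `x` with polarity `b`, then `T`
remains an `(i,d,k)`-obstruction-tree of `φ[x := b]`. -/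
theorem obsTree_local (i d k : ℕ) (φ : CNF) (hφ : φ.InC d)
    (T : ObsTree) (hT : IsObsTree φ d k i T) (x : Var) (b : Bool)
    (hx : x ∈ φ.vars)
    (hvar : Sum.inl x ∉ T.elts φ)
    (hcla : ∀ c ∈ T.claSet φ, x ∉ (if b then φ.pos c else φ.neg c)) :
    IsObsTree (φ.assign x b) d k i T :=
  obsTree_local_general i d k φ T hT x b hvar hcla
end
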